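/- For n ≥ 1, ∑_{k=0}^n C(n,k) * (-1)^{k-1} * H k * F k = H n * F n - ∑_{m=0}^{n-1} F m / (n-m), where H k is the k-th harmonic number and F k the k-th Fibonacci number (F 0 = 0, F 1 = 1). -/

import Mathlib

/-!
Let `B a n = ∑ₖ C(n,k) (-1)ᵏ a k`. For every sequence `a`,
`B (a · H) n = H n · B a n - ∑_{m<n} B a m / (n - m)`.
This is proved by induction on `n` simultaneously for all `a`, from the Pascal rule
`B a (n+1) = B a n - B (a ∘ succ) n`, the recursion `H (k+1) = H k + 1/(k+1)` and the absorption
identity `C(n,k)/(k+1) = C(n+1,k+1)/(n+1)`. The same Pascal rule together with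
`F (k+2) = F k + F (k+1)` gives `B F = -F`, and the theorem is the case `a = F`.
-/

open Finset Nat

/-- `binomialTransform a n = (-1)ⁿ Δⁿ a 0`. -/
def binomialTransform {R : Type*} [Ring R] (a : ℕ → R) (n : ℕ) : R :=
  ∑ k ∈ range (n + 1), (n.choose k : R) * (-1) ^ k * a k

section CommRing

variable {R : Type*} [CommRing R]

@[simp]
lemma binomialTransform_zero (a : ℕ → R) : binomialTransform a 0 = a 0 := by
  simp [binomialTransform]

lemma binomialTransform_add (a b : ℕ → R) (n : ℕ) :
    binomialTransform (a + b) n = binomialTransform a n + binomialTransform b n := by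
  simp only [binomialTransform, Pi.add_apply, mul_add, sum_add_distrib]

lemma binomialTransform_succ (a : ℕ → R) (n : ℕ) :
    binomialTransform a (n + 1) =
      binomialTransform a n - binomialTransform (fun k ↦ a (k + 1)) n := by
  have := sum_choose_succ_mul (R := R) (fun i _ ↦ (-1) ^ i * a i) n
  simp only [binomialTransform, mul_assoc, this, sub_eq_add_neg, ← sum_neg_distrib]
  congr 1
  exact sum_congr rfl fun k _ ↦ by ring

lemma binomialTransform_fib_and_fib_succ (n : ℕ) :
    binomialTransform (fun k ↦ (fib k : R)) n = -fib n ∧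
      binomialTransform (fun k ↦ (fib (k + 1) : R)) n = fib (n + 1) - fib n := by
  induction n with
  | zero => simp
  | succ n ih =>
    have hfib : (fun k ↦ (fib (k + 2) : R)) =
        (fun k ↦ (fib k : R)) + fun k ↦ (fib (k + 1) : R) := by
      ext k
      simp [fib_add_two]
    rw [binomialTransform_succ, binomialTransform_succ, ih.1, ih.2, hfib, binomialTransform_add,
      ih.1, ih.2, fib_add_two]
    push_cast
    constructor <;> ring

lemma binomialTransform_fib (n : ℕ) : binomialTransform (fun k ↦ (fib k : R)) n = -fib n :=
  (binomialTransform_fib_and_fib_succ n).1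

end CommRing

section Field

variable {K : Type*} [Field K] [CharZero K]

lemma binomialTransform_shift_div_succ (a : ℕ → K) (n : ℕ) :
    binomialTransform (fun k ↦ a (k + 1) / (k + 1)) n =
      (a 0 - binomialTransform a (n + 1)) / (n + 1) := by
  have hchoose (k : ℕ) :
      (n.choose k : K) / (k + 1) = ((n + 1).choose (k + 1) : K) / (n + 1) := by
    rw [div_eq_div_iff (Nat.cast_add_one_ne_zero k) (Nat.cast_add_one_ne_zero n), mul_comm]
    exact_mod_cast add_one_mul_choose_eq n k
  calc binomialTransform (fun k ↦ a (k + 1) / (k + 1)) n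
      = (∑ k ∈ range (n + 1), ((n + 1).choose (k + 1) : K) * (-1) ^ k * a (k + 1)) / (n + 1) := by
        rw [binomialTransform, sum_div]
        exact sum_congr rfl fun k _ ↦ by linear_combination (-1) ^ k * a (k + 1) * hchoose k
    _ = (a 0 - binomialTransform a (n + 1)) / (n + 1) := by
        simp [binomialTransform, sum_range_succ' _ (n + 1), pow_succ]

lemma binomialTransform_mul_harmonic (a : ℕ → K) (n : ℕ) :
    binomialTransform (fun k ↦ a k * harmonic k) n =
      harmonic n * binomialTransform a n -
        ∑ m ∈ range n, binomialTransform a m / (n - m : ℕ) := by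
  induction n generalizing a with
  | zero => simp
  | succ n ih =>
    have hshift : (fun k ↦ a (k + 1) * harmonic (k + 1) : ℕ → K) =
        (fun k ↦ a (k + 1) * harmonic k) + fun k ↦ a (k + 1) / (k + 1) := by
      ext k
      simp [mul_add, div_eq_mul_inv]
    have hconv : ∑ m ∈ range (n + 1), binomialTransform a m / (n + 1 - m : ℕ) =
        ∑ m ∈ range n, binomialTransform a m / (n - m : ℕ) -
          ∑ m ∈ range n, binomialTransform (fun k ↦ a (k + 1)) m / (n - m : ℕ) +
          a 0 / (n + 1) := by
      rw [sum_range_succ', ← sum_sub_distrib]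
      simp [binomialTransform_succ, sub_div]
    rw [binomialTransform_succ, hshift, binomialTransform_add, ih, ih,
      binomialTransform_shift_div_succ, hconv, binomialTransform_succ, harmonic_succ]
    push_cast
    ring

end Field

theorem stmt_17_general (H : ℕ → ℚ) (hH : ∀ n, H n = ∑ j ∈ Finset.range n, (1 : ℚ) / (j + 1))
    (n : ℕ) :
    ∑ k ∈ Finset.range (n+1), (n.choose k : ℚ) * (-1 : ℚ)^(k - 1) * H k * (Nat.fib k : ℚ) =
      H n * (Nat.fib n : ℚ) - ∑ m ∈ Finset.range n, (Nat.fib m : ℚ) / (n - m : ℕ) := by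
  obtain rfl : H = harmonic := funext fun k ↦ by simp [hH, harmonic]
  have hlhs : ∑ k ∈ range (n + 1), (n.choose k : ℚ) * (-1) ^ (k - 1) * harmonic k * fib k =
      -binomialTransform (fun k ↦ (fib k : ℚ) * harmonic k) n := by
    rw [binomialTransform, ← sum_neg_distrib]
    refine sum_congr rfl fun k _ ↦ ?_
    cases k with
    -- `(-1) ^ (0 - 1) = 1` has the wrong sign, but `harmonic 0 = 0`
    | zero => simp
    | succ k => simp only [add_tsub_cancel_right, pow_succ]; ring
  have hrhs : ∑ m ∈ range n, (fib m : ℚ) / (n - m : ℕ) =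
      -∑ m ∈ range n, binomialTransform (fun k ↦ (fib k : ℚ)) m / (n - m : ℕ) := by
    simp only [binomialTransform_fib, neg_div, sum_neg_distrib, neg_neg]
  have hmain := binomialTransform_mul_harmonic (fun k ↦ (fib k : ℚ)) n
  simp only [Rat.cast_id] at hmain
  rw [hlhs, hrhs, hmain, binomialTransform_fib]
  ring

theorem stmt_17 (H : ℕ → ℚ) (hH : ∀ n, H n = ∑ j ∈ Finset.range n, (1 : ℚ) / (j + 1))
    (n : ℕ) (hn : 1 ≤ n) :
    ∑ k ∈ Finset.range (n+1), (n.choose k : ℚ) * (-1 : ℚ)^(k - 1) * H k * (Nat.fib k : ℚ) =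
      H n * (Nat.fib n : ℚ) - ∑ m ∈ Finset.range n, (Nat.fib m : ℚ) / (n - m : ℕ) :=
  stmt_17_general H hH n
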